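/- Let p be an odd prime and let I = { A ∈ SL₂(ℤ_p) : A₁₁, A₂₂ ∈ 1 + pℤ_p, A₂₁ ∈ pℤ_p }. Let N = { A ∈ SL₂(ℤ_p) : A₁₁, A₂₂ ∈ 1 + pℤ_p, A₁₂ ∈ pℤ_p, A₂₁ ∈ p²ℤ_p }. Then N is a normal subgroup of I containing every commutator and every p-th power of elements of I, and the map I → (ℤ/pℤ) × (ℤ/pℤ) sending A to (the residue of A₂₁/p modulo p, the residue of A₁₂ modulo p) induces a group isomorphism I/N ≅ (ℤ/pℤ)². -/

import Mathlib

/-- The standard pro-`p` Iwahori subgroup of `SL₂(ℚ_p)` (as a set). -/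
def Iwahori (p : ℕ) [Fact p.Prime] :
    Set (Matrix.SpecialLinearGroup (Fin 2) ℚ_[p]) :=
  {A | (∃ x : ℤ_[p], (A : Matrix (Fin 2) (Fin 2) ℚ_[p]) 0 0 = 1 + (p : ℚ_[p]) * x) ∧
       (∃ x : ℤ_[p], (A : Matrix (Fin 2) (Fin 2) ℚ_[p]) 1 1 = 1 + (p : ℚ_[p]) * x) ∧
       (∃ x : ℤ_[p], (A : Matrix (Fin 2) (Fin 2) ℚ_[p]) 0 1 = (x : ℚ_[p])) ∧
       (∃ x : ℤ_[p], (A : Matrix (Fin 2) (Fin 2) ℚ_[p]) 1 0 = (p : ℚ_[p]) * x)}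

/-- The Frattini subgroup `N` of the pro-`p` Iwahori subgroup (as a set). -/
def Nset (p : ℕ) [Fact p.Prime] :
    Set (Matrix.SpecialLinearGroup (Fin 2) ℚ_[p]) :=
  {A | (∃ x : ℤ_[p], (A : Matrix (Fin 2) (Fin 2) ℚ_[p]) 0 0 = 1 + (p : ℚ_[p]) * x) ∧
       (∃ x : ℤ_[p], (A : Matrix (Fin 2) (Fin 2) ℚ_[p]) 1 1 = 1 + (p : ℚ_[p]) * x) ∧
       (∃ x : ℤ_[p], (A : Matrix (Fin 2) (Fin 2) ℚ_[p]) 0 1 = (p : ℚ_[p]) * x) ∧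
       (∃ x : ℤ_[p], (A : Matrix (Fin 2) (Fin 2) ℚ_[p]) 1 0 = (p : ℚ_[p]) ^ 2 * x)}

section Aux

variable {p : ℕ} [Fact p.Prime]

/-- Reduction mod `p` of an element of `ℚ_p`, extended by `0` outside `ℤ_p`. -/
noncomputable def gfun (p : ℕ) [Fact p.Prime] (x : ℚ_[p]) : ZMod p :=
  if h : ‖x‖ ≤ 1 then PadicInt.toZMod (⟨x, h⟩ : ℤ_[p]) else 0

lemma gfun_coe (w : ℤ_[p]) : gfun p (w : ℚ_[p]) = PadicInt.toZMod w := by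
  rw [gfun, dif_pos w.2]; exact congrArg _ (Subtype.ext rfl)

/-- The map `A ↦ (A₂₁/p mod p, A₁₂ mod p)`. -/
noncomputable def ffun (p : ℕ) [Fact p.Prime]
    (A : Matrix.SpecialLinearGroup (Fin 2) ℚ_[p]) : ZMod p × ZMod p :=
  (gfun p ((A : Matrix (Fin 2) (Fin 2) ℚ_[p]) 1 0 / p),
   gfun p ((A : Matrix (Fin 2) (Fin 2) ℚ_[p]) 0 1))

lemma hpne : ((p : ℚ_[p])) ≠ 0 :=
  Nat.cast_ne_zero.mpr (Fact.out : p.Prime).ne_zero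

lemma ffun_spec (A : Matrix.SpecialLinearGroup (Fin 2) ℚ_[p]) (c b : ℤ_[p])
    (hc : (A : Matrix (Fin 2) (Fin 2) ℚ_[p]) 1 0 = (p : ℚ_[p]) * c)
    (hb : (A : Matrix (Fin 2) (Fin 2) ℚ_[p]) 0 1 = (b : ℚ_[p])) :
    ffun p A = (PadicInt.toZMod c, PadicInt.toZMod b) := by
  rw [ffun, hc, hb, mul_div_cancel_left₀ _ hpne, gfun_coe, gfun_coe]

lemma mul_entry (A B : Matrix.SpecialLinearGroup (Fin 2) ℚ_[p]) (i j : Fin 2) :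
    ((A * B : Matrix.SpecialLinearGroup (Fin 2) ℚ_[p]) : Matrix (Fin 2) (Fin 2) ℚ_[p]) i j
      = (A : Matrix (Fin 2) (Fin 2) ℚ_[p]) i 0 * (B : Matrix (Fin 2) (Fin 2) ℚ_[p]) 0 j
        + (A : Matrix (Fin 2) (Fin 2) ℚ_[p]) i 1 * (B : Matrix (Fin 2) (Fin 2) ℚ_[p]) 1 j := by
  simp [Matrix.SpecialLinearGroup.coe_mul, Matrix.mul_apply, Fin.sum_univ_two]

lemma inv_entries (A : Matrix.SpecialLinearGroup (Fin 2) ℚ_[p]) :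
    ((A⁻¹ : Matrix.SpecialLinearGroup (Fin 2) ℚ_[p]) : Matrix (Fin 2) (Fin 2) ℚ_[p])
      = !![(A : Matrix (Fin 2) (Fin 2) ℚ_[p]) 1 1, -(A : Matrix (Fin 2) (Fin 2) ℚ_[p]) 0 1;
           -(A : Matrix (Fin 2) (Fin 2) ℚ_[p]) 1 0, (A : Matrix (Fin 2) (Fin 2) ℚ_[p]) 0 0] := by
  rw [Matrix.SpecialLinearGroup.coe_inv, Matrix.adjugate_fin_two]

lemma Iwahori_one : (1 : Matrix.SpecialLinearGroup (Fin 2) ℚ_[p]) ∈ Iwahori p :=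
  ⟨⟨0, by simp⟩, ⟨0, by simp⟩, ⟨0, by simp⟩, ⟨0, by simp⟩⟩

lemma Iwahori_mul {A B : Matrix.SpecialLinearGroup (Fin 2) ℚ_[p]}
    (hA : A ∈ Iwahori p) (hB : B ∈ Iwahori p) : A * B ∈ Iwahori p := by
  obtain ⟨⟨xA, hxA⟩, ⟨yA, hyA⟩, ⟨zA, hzA⟩, ⟨wA, hwA⟩⟩ := hA
  obtain ⟨⟨xB, hxB⟩, ⟨yB, hyB⟩, ⟨zB, hzB⟩, ⟨wB, hwB⟩⟩ := hB
  refine ⟨⟨xA + xB + p * xA * xB + zA * wB, ?_⟩,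
          ⟨wA * zB + yA + yB + p * yA * yB, ?_⟩,
          ⟨zB + p * xA * zB + zA + p * zA * yB, ?_⟩,
          ⟨wA + p * wA * xB + wB + p * yA * wB, ?_⟩⟩ <;>
    · simp only [mul_entry, hxA, hxB, hyA, hyB, hzA, hzB, hwA, hwB]
      push_cast; ring

lemma Iwahori_inv {A : Matrix.SpecialLinearGroup (Fin 2) ℚ_[p]}
    (hA : A ∈ Iwahori p) : A⁻¹ ∈ Iwahori p := by
  obtain ⟨⟨x, hx⟩, ⟨y, hy⟩, ⟨z, hz⟩, ⟨w, hw⟩⟩ := hA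
  refine ⟨⟨y, ?_⟩, ⟨x, ?_⟩, ⟨-z, ?_⟩, ⟨-w, ?_⟩⟩ <;>
    · rw [inv_entries]
      push_cast
      simp [hx, hy, hz, hw]

lemma ffun_mul' {A B : Matrix.SpecialLinearGroup (Fin 2) ℚ_[p]}
    (hA : A ∈ Iwahori p) (hB : B ∈ Iwahori p) :
    ffun p (A * B) = ffun p A + ffun p B := by
  obtain ⟨⟨xA, hxA⟩, ⟨yA, hyA⟩, ⟨zA, hzA⟩, ⟨wA, hwA⟩⟩ := hA
  obtain ⟨⟨xB, hxB⟩, ⟨yB, hyB⟩, ⟨zB, hzB⟩, ⟨wB, hwB⟩⟩ := hB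
  rw [ffun_spec (A * B) (wA + wB + p * (wA * xB + yA * wB)) (zA + zB + p * (xA * zB + zA * yB))
      (by simp only [mul_entry, hxA, hxB, hyA, hyB, hzA, hzB, hwA, hwB]; push_cast; ring)
      (by simp only [mul_entry, hxA, hxB, hyA, hyB, hzA, hzB, hwA, hwB]; push_cast; ring),
    ffun_spec A wA zA hwA hzA, ffun_spec B wB zB hwB hzB]
  simp [Prod.ext_iff, map_add, map_mul, map_natCast]

lemma ffun_one : ffun p (1 : Matrix.SpecialLinearGroup (Fin 2) ℚ_[p]) = 0 := by
  rw [ffun_spec 1 0 0 (by simp) (by simp)]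
  simp [Prod.ext_iff]

lemma toZMod_eq_zero_iff (x : ℤ_[p]) :
    PadicInt.toZMod x = 0 ↔ ∃ y : ℤ_[p], x = p * y := by
  constructor
  · intro h
    have hx : x ∈ RingHom.ker (PadicInt.toZMod : ℤ_[p] →+* ZMod p) := h
    rw [PadicInt.ker_toZMod, PadicInt.maximalIdeal_eq_span_p, Ideal.mem_span_singleton] at hx
    obtain ⟨y, hy⟩ := hx
    exact ⟨y, hy⟩
  · rintro ⟨y, rfl⟩
    simp [map_mul, map_natCast]

lemma Nset_subset {A : Matrix.SpecialLinearGroup (Fin 2) ℚ_[p]}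
    (hA : A ∈ Nset p) : A ∈ Iwahori p := by
  obtain ⟨h1, h2, ⟨u, hu⟩, ⟨v, hv⟩⟩ := hA
  exact ⟨h1, h2, ⟨p * u, by rw [hu]; push_cast; ring⟩, ⟨p * v, by rw [hv]; push_cast; ring⟩⟩

lemma ffun_zero_iff {A : Matrix.SpecialLinearGroup (Fin 2) ℚ_[p]}
    (hA : A ∈ Iwahori p) : ffun p A = 0 ↔ A ∈ Nset p := by
  obtain ⟨hx, hy, ⟨z, hz⟩, ⟨w, hw⟩⟩ := hA
  rw [ffun_spec A w z hw hz]
  constructor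
  · intro h
    rw [Prod.ext_iff] at h
    obtain ⟨w', hw'⟩ := (toZMod_eq_zero_iff w).mp h.1
    obtain ⟨z', hz'⟩ := (toZMod_eq_zero_iff z).mp h.2
    exact ⟨hx, hy, ⟨z', by rw [hz, hz']; push_cast; ring⟩,
           ⟨w', by rw [hw, hw']; push_cast; ring⟩⟩
  · rintro ⟨-, -, ⟨u, hu⟩, ⟨v, hv⟩⟩
    have hz0 : (z : ℚ_[p]) = ((p * u : ℤ_[p]) : ℚ_[p]) := by rw [← hz, hu]; push_cast; ring
    have hw0 : (p : ℚ_[p]) * w = (p : ℚ_[p]) * ((p * v : ℤ_[p]) : ℚ_[p]) := by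
      rw [← hw, hv]; push_cast; ring
    have hz1 : z = p * u := Subtype.coe_injective hz0
    have hw1 : w = p * v := Subtype.coe_injective (mul_left_cancel₀ hpne hw0)
    simp [Prod.ext_iff, hz1, hw1, map_mul, map_natCast]

end Aux

/-- `N` is a normal subgroup of `I` containing all commutators and `p`-th powers,
and `A ↦ (A₂₁/p mod p, A₁₂ mod p)` induces an isomorphism `I/N ≅ (ℤ/p)²`. -/
theorem stmt16 (p : ℕ) [Fact p.Prime] (hp : Odd p) :
    ((1 : Matrix.SpecialLinearGroup (Fin 2) ℚ_[p]) ∈ Nset p) ∧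
    (∀ A ∈ Nset p, ∀ B ∈ Nset p, A * B ∈ Nset p) ∧
    (∀ A ∈ Nset p, A⁻¹ ∈ Nset p) ∧
    (∀ A ∈ Nset p, A ∈ Iwahori p) ∧
    (∀ g ∈ Iwahori p, ∀ n ∈ Nset p, g * n * g⁻¹ ∈ Nset p) ∧
    (∀ g ∈ Iwahori p, ∀ h ∈ Iwahori p, g * h * g⁻¹ * h⁻¹ ∈ Nset p) ∧
    (∀ g ∈ Iwahori p, g ^ p ∈ Nset p) ∧
    ∃ f : Matrix.SpecialLinearGroup (Fin 2) ℚ_[p] → ZMod p × ZMod p,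
      (∀ A ∈ Iwahori p, ∀ c b : ℤ_[p],
          (A : Matrix (Fin 2) (Fin 2) ℚ_[p]) 1 0 = (p : ℚ_[p]) * c →
          (A : Matrix (Fin 2) (Fin 2) ℚ_[p]) 0 1 = (b : ℚ_[p]) →
          f A = (PadicInt.toZMod c, PadicInt.toZMod b)) ∧
      (∀ A ∈ Iwahori p, ∀ B ∈ Iwahori p, f (A * B) = f A + f B) ∧
      (∀ z : ZMod p × ZMod p, ∃ A ∈ Iwahori p, f A = z) ∧
      (∀ A ∈ Iwahori p, (f A = 0 ↔ A ∈ Nset p)) := by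
  haveI : NeZero p := ⟨(Fact.out : p.Prime).ne_zero⟩
  have hinv : ∀ A ∈ Iwahori p, ffun p A⁻¹ = - ffun p A := by
    intro A hA
    have h := ffun_mul' hA (Iwahori_inv hA)
    rw [mul_inv_cancel, ffun_one] at h
    exact eq_neg_of_add_eq_zero_right h.symm
  refine ⟨(ffun_zero_iff Iwahori_one).mp ffun_one, ?_, ?_, fun A hA => Nset_subset hA,
    ?_, ?_, ?_, ?_⟩
  · intro A hA B hB
    have hAI := Nset_subset hA
    have hBI := Nset_subset hB
    refine (ffun_zero_iff (Iwahori_mul hAI hBI)).mp ?_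
    rw [ffun_mul' hAI hBI, (ffun_zero_iff hAI).mpr hA, (ffun_zero_iff hBI).mpr hB, add_zero]
  · intro A hA
    have hAI := Nset_subset hA
    refine (ffun_zero_iff (Iwahori_inv hAI)).mp ?_
    rw [hinv A hAI, (ffun_zero_iff hAI).mpr hA, neg_zero]
  · intro g hg n hn
    have hnI := Nset_subset hn
    refine (ffun_zero_iff (Iwahori_mul (Iwahori_mul hg hnI) (Iwahori_inv hg))).mp ?_
    rw [ffun_mul' (Iwahori_mul hg hnI) (Iwahori_inv hg), ffun_mul' hg hnI,
      (ffun_zero_iff hnI).mpr hn, hinv g hg]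
    abel
  · intro g hg h hh
    refine (ffun_zero_iff (Iwahori_mul (Iwahori_mul (Iwahori_mul hg hh) (Iwahori_inv hg))
      (Iwahori_inv hh))).mp ?_
    rw [ffun_mul' (Iwahori_mul (Iwahori_mul hg hh) (Iwahori_inv hg)) (Iwahori_inv hh),
      ffun_mul' (Iwahori_mul hg hh) (Iwahori_inv hg), ffun_mul' hg hh,
      hinv g hg, hinv h hh]
    abel
  · intro g hg
    have hmem : ∀ n : ℕ, g ^ n ∈ Iwahori p := by
      intro n
      induction n with
      | zero => simpa using (Iwahori_one : (1 : _) ∈ Iwahori p)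
      | succ n ih => rw [pow_succ]; exact Iwahori_mul ih hg
    have hf : ∀ n : ℕ, ffun p (g ^ n) = n • ffun p g := by
      intro n
      induction n with
      | zero => simpa using (ffun_one : ffun p 1 = 0)
      | succ n ih => rw [pow_succ, ffun_mul' (hmem n) hg, ih, succ_nsmul]
    refine (ffun_zero_iff (hmem p)).mp ?_
    rw [hf p]
    rcases hq : ffun p g with ⟨a, b⟩
    simp [Prod.ext_iff, nsmul_eq_mul, ZMod.natCast_self]
  · refine ⟨ffun p, fun A _ c b hc hb => ffun_spec A c b hc hb,
      fun A hA B hB => ffun_mul' hA hB, ?_, fun A hA => ffun_zero_iff hA⟩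
    intro z
    set b : ℤ_[p] := (z.2.val : ℤ_[p]) with hbdef
    set c : ℤ_[p] := (z.1.val : ℤ_[p]) with hcdef
    refine ⟨⟨!![1, (b : ℚ_[p]); (p : ℚ_[p]) * c, 1 + (p : ℚ_[p]) * (b * c)], ?_⟩, ?_, ?_⟩
    · rw [Matrix.det_fin_two_of]; push_cast; ring
    · exact ⟨⟨0, by simp⟩, ⟨b * c, by simp⟩, ⟨b, by simp⟩, ⟨c, by simp⟩⟩
    · refine (ffun_spec _ c b ?_ ?_).trans ?_
      · simp
      · simp
      simp [hbdef, hcdef, map_natCast, ZMod.natCast_val, ZMod.cast_id]
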